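/- Fix 0 < β ≤ log 4 and set K_c^{(2)}(β) := 1/(4βe^{−β}) + 1/(2β) (equivalently K_c^{(2)}(β) = 1/(2β c_β''(0))). Then: (a) for every 0 < K ≤ K_c^{(2)}(β), Ẽ_{β,K} = {0}; (b) for every K > K_c^{(2)}(β) there exists a number z̃(β,K) > 0 such that Ẽ_{β,K} = {z̃(β,K), −z̃(β,K)}; (c) the function K ↦ z̃(β,K) is strictly increasing and continuous on (K_c^{(2)}(β), ∞), and z̃(β,K) → 0 as K → K_c^{(2)}(β)⁺. -/

import Mathlib

/-!
Write `A = e^{-β}`. The map `c_β'(t) = 2A sinh t / (1 + 2A cosh t)` is an increasing bijection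
`ℝ → (-1, 1)` and, `c_β` being convex, `J_β(c_β'(t)) = t c_β'(t) - c_β(t)`. So on `(-1, 1)` the
function `J_β(z) - βKz²` becomes the even function `g(t) = t c_β'(t) - c_β(t) - βK c_β'(t)²`,
with `g'(t) = c_β''(t) (t - 2βK c_β'(t))`, while `z = ±1` never minimize. For `A ≥ 1/4`, i.e.
`β ≤ log 4`, `c_β'` is strictly concave on `[0, ∞)`, so `K(t) = t / (2β c_β'(t))` increases
strictly from `1 / (2β c_β''(0)) = K_c^{(2)}(β)` to `∞`. Hence `g` is strictly increasing on
`[0, ∞)` when `K ≤ K_c^{(2)}(β)`, and otherwise decreases up to `t̃ = K⁻¹(K)` and increases after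
it; `z̃ = c_β'(t̃)` inherits monotonicity and continuity from the inverse `K⁻¹`.
-/

noncomputable section

/-- `c_β(t) = log[(1 + e^{−β}(e^t + e^{−t}))/(1 + 2e^{−β})]`. -/
def cBeta (β t : ℝ) : ℝ :=
  Real.log ((1 + Real.exp (-β) * (Real.exp t + Real.exp (-t))) / (1 + 2 * Real.exp (-β)))

/-- `J_β(z) = sup_{t ∈ ℝ} {t z − c_β(t)}`, the Legendre–Fenchel transform of `c_β`
(finite on `[-1,1]`, where it is used below). -/
def Jbeta (β z : ℝ) : ℝ := ⨆ t : ℝ, (t * z - cBeta β t)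

/-- `Ẽ_{β,K}`: the set of `z ∈ [-1,1]` minimizing `J_β(z) − βK z²` over `[-1,1]`. -/
def tildeE (β K : ℝ) : Set ℝ :=
  {z | z ∈ Set.Icc (-1 : ℝ) 1 ∧
    ∀ y ∈ Set.Icc (-1 : ℝ) 1, Jbeta β z - β * K * z ^ 2 ≤ Jbeta β y - β * K * y ^ 2}

/-- The second-order critical value `K_c^{(2)}(β) = 1/(4βe^{−β}) + 1/(2β)`. -/
def Kc2 (β : ℝ) : ℝ := 1 / (4 * β * Real.exp (-β)) + 1 / (2 * β)

open Real Set Filter Topology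

lemma ConvexOn.add_mul_sub_le_of_hasDerivAt {S : Set ℝ} {f : ℝ → ℝ} {f' x y : ℝ}
    (hf : ConvexOn ℝ S f) (hx : x ∈ S) (hy : y ∈ S) (hf' : HasDerivAt f f' x) :
    f x + f' * (y - x) ≤ f y := by
  rcases lt_trichotomy x y with h | rfl | h
  · have := hf.le_slope_of_hasDerivAt hx hy h hf'
    rw [slope_def_field, le_div_iff₀ (sub_pos.2 h)] at this
    linarith
  · simp
  · have := hf.slope_le_of_hasDerivAt hy hx h hf'
    rw [slope_def_field, div_le_iff₀ (sub_pos.2 h)] at this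
    linarith

lemma Function.Even.lt_of_strictAntiOn_of_strictMonoOn {f : ℝ → ℝ} {a t : ℝ} (hf : f.Even)
    (hanti : StrictAntiOn f (Icc 0 a)) (hmono : StrictMonoOn f (Ici a)) (hta : t ≠ a)
    (hta' : t ≠ -a) : f a < f t := by
  have key : ∀ s, 0 ≤ s → s ≠ a → f a < f s := fun s hs hsa => by
    rcases hsa.lt_or_gt with h | h
    · exact hanti ⟨hs, h.le⟩ ⟨hs.trans h.le, le_rfl⟩ h
    · exact hmono self_mem_Ici h.le h
  rcases le_or_gt 0 t with ht | ht
  · exact key t ht hta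
  · rw [← hf t]
    exact key (-t) (by linarith) fun h => hta' (by linarith)

lemma StrictMonoOn.strictMonoOn_invFunOn {α β : Type*} [LinearOrder α] [LinearOrder β]
    [Nonempty α] {f : α → β} {s : Set α} {t : Set β} (hf : StrictMonoOn f s) (hst : SurjOn f s t) :
    StrictMonoOn (Function.invFunOn f s) t := fun x hx y hy hxy =>
  (hf.lt_iff_lt (hst.mapsTo_invFunOn hx) (hst.mapsTo_invFunOn hy)).1 <| by
    rwa [hst.rightInvOn_invFunOn hx, hst.rightInvOn_invFunOn hy]

lemma StrictMonoOn.continuousOn_of_isOpen_image {α β : Type*} [LinearOrder α] [TopologicalSpace α]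
    [OrderTopology α] [LinearOrder β] [TopologicalSpace β] [OrderTopology β] [DenselyOrdered β]
    {f : α → β} {s : Set α} (hf : StrictMonoOn f s) (hs : IsOpen s) (hfs : IsOpen (f '' s)) :
    ContinuousOn f s := fun _ ha =>
  (hf.continuousAt_of_image_mem_nhds (hs.mem_nhds ha)
    (hfs.mem_nhds (mem_image_of_mem f ha))).continuousWithinAt

def cBeta' (β t : ℝ) : ℝ := 2 * exp (-β) * sinh t / (1 + 2 * exp (-β) * cosh t)

def cBeta'' (β t : ℝ) : ℝ :=
  (2 * exp (-β) * cosh t + 4 * exp (-β) ^ 2) / (1 + 2 * exp (-β) * cosh t) ^ 2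

section Calculus

variable (β : ℝ)

lemma one_add_two_mul_exp_neg_mul_cosh_pos (t : ℝ) : 0 < 1 + 2 * exp (-β) * cosh t := by
  have := cosh_pos t; positivity

lemma cBeta_eq_log_sub_log (t : ℝ) :
    cBeta β t = log (1 + 2 * exp (-β) * cosh t) - log (1 + 2 * exp (-β)) := by
  rw [cBeta, log_div (by positivity) (by positivity), cosh_eq]
  ring_nf

lemma cBeta_neg (t : ℝ) : cBeta β (-t) = cBeta β t := by
  simp only [cBeta_eq_log_sub_log, cosh_neg]

lemma hasDerivAt_cBeta (t : ℝ) : HasDerivAt (cBeta β) (cBeta' β t) t := by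
  have h := (((hasDerivAt_cosh t).const_mul (2 * exp (-β))).const_add 1).log
    (one_add_two_mul_exp_neg_mul_cosh_pos β t).ne'
  rw [funext (cBeta_eq_log_sub_log β)]
  exact h.sub_const _

lemma hasDerivAt_cBeta' (t : ℝ) : HasDerivAt (cBeta' β) (cBeta'' β t) t := by
  have h := ((hasDerivAt_sinh t).const_mul (2 * exp (-β))).div
    (((hasDerivAt_cosh t).const_mul (2 * exp (-β))).const_add 1)
    (one_add_two_mul_exp_neg_mul_cosh_pos β t).ne'
  refine h.congr_deriv ?_
  rw [cBeta'']
  congr 1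
  linear_combination 4 * exp (-β) ^ 2 * cosh_sq t

lemma hasDerivAt_cBeta'' (t : ℝ) :
    HasDerivAt (cBeta'' β) (2 * exp (-β) * sinh t * (1 - 2 * exp (-β) * cosh t - 8 * exp (-β) ^ 2)
      / (1 + 2 * exp (-β) * cosh t) ^ 3) t := by
  have hN := one_add_two_mul_exp_neg_mul_cosh_pos β t
  have h := ((((hasDerivAt_cosh t).const_mul (2 * exp (-β))).add_const (4 * exp (-β) ^ 2))).div
    ((((hasDerivAt_cosh t).const_mul (2 * exp (-β))).const_add 1).pow 2) (pow_pos hN 2).ne'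
  refine h.congr_deriv ?_
  simp only [Pi.pow_apply, Nat.cast_ofNat]
  field_simp
  ring

lemma cBeta'_zero : cBeta' β 0 = 0 := by simp [cBeta']

lemma cBeta'_neg (t : ℝ) : cBeta' β (-t) = -cBeta' β t := by
  simp only [cBeta', sinh_neg, cosh_neg]; ring

lemma cBeta''_pos (t : ℝ) : 0 < cBeta'' β t := by
  have := cosh_pos t; unfold cBeta''; positivity

lemma cBeta''_zero : cBeta'' β 0 = 2 * exp (-β) / (1 + 2 * exp (-β)) := by
  have := exp_pos (-β)
  rw [cBeta'', cosh_zero]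
  field_simp
  ring

lemma strictMono_cBeta' : StrictMono (cBeta' β) :=
  strictMono_of_hasDerivAt_pos (hasDerivAt_cBeta' β) (cBeta''_pos β)

lemma continuous_cBeta' : Continuous (cBeta' β) :=
  continuous_iff_continuousAt.2 fun t => (hasDerivAt_cBeta' β t).continuousAt

lemma cBeta'_pos {t : ℝ} (ht : 0 < t) : 0 < cBeta' β t :=
  cBeta'_zero β ▸ strictMono_cBeta' β ht

lemma abs_cBeta'_lt_one (t : ℝ) : |cBeta' β t| < 1 := by
  have hN := one_add_two_mul_exp_neg_mul_cosh_pos β t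
  rw [cBeta', abs_div, abs_of_pos hN, div_lt_one hN, abs_mul, abs_of_pos (by positivity),
    abs_sinh]
  have := sinh_lt_cosh |t|
  rw [cosh_abs] at this
  nlinarith [exp_pos (-β)]

lemma tendsto_cBeta'_atTop : Tendsto (cBeta' β) atTop (𝓝 1) := by
  have h : ∀ t, cBeta' β t = 1 - (1 + 2 * exp (-β) * exp (-t)) / (1 + 2 * exp (-β) * cosh t) := by
    intro t
    have hN := one_add_two_mul_exp_neg_mul_cosh_pos β t
    rw [cBeta', eq_sub_iff_add_eq, ← add_div, div_eq_one_iff_eq hN.ne', sinh_eq, cosh_eq]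
    ring
  have hnum : Tendsto (fun t => 1 + 2 * exp (-β) * exp (-t)) atTop (𝓝 1) := by
    simpa using (tendsto_exp_neg_atTop_nhds_zero.const_mul (2 * exp (-β))).const_add 1
  have hden : Tendsto (fun t => 1 + 2 * exp (-β) * cosh t) atTop atTop :=
    tendsto_atTop_mono (fun t => by rw [cosh_eq]; nlinarith [mul_pos (exp_pos (-β)) (exp_pos (-t))])
      (tendsto_exp_atTop.const_mul_atTop (exp_pos (-β)))
  rw [funext h]
  simpa using tendsto_const_nhds.sub (hnum.div_atTop hden)

lemma surjOn_cBeta' : SurjOn (cBeta' β) univ (Ioo (-1) 1) := by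
  intro z ⟨hz₁, hz₂⟩
  obtain ⟨b, hb⟩ := ((tendsto_cBeta'_atTop β).eventually_const_lt hz₂).exists
  obtain ⟨a, ha⟩ := ((tendsto_cBeta'_atTop β).eventually_const_lt (neg_lt.1 hz₁)).exists
  obtain ⟨t, ht⟩ := mem_range_of_exists_le_of_exists_ge (continuous_cBeta' β)
    ⟨-a, by rw [cBeta'_neg]; linarith⟩ ⟨b, hb.le⟩
  exact ⟨t, mem_univ t, ht⟩

end Calculus

section Legendre

variable (β : ℝ)

lemma convexOn_cBeta : ConvexOn ℝ univ (cBeta β) := by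
  have hderiv : deriv (cBeta β) = cBeta' β := funext fun t => (hasDerivAt_cBeta β t).deriv
  exact Monotone.convexOn_univ_of_deriv (fun t => (hasDerivAt_cBeta β t).differentiableAt)
    (hderiv ▸ (strictMono_cBeta' β).monotone)

lemma cBeta_add_mul_sub_le (t s : ℝ) : cBeta β t + cBeta' β t * (s - t) ≤ cBeta β s :=
  (convexOn_cBeta β).add_mul_sub_le_of_hasDerivAt (mem_univ t) (mem_univ s)
    (hasDerivAt_cBeta β t)

lemma Jbeta_cBeta' (t : ℝ) : Jbeta β (cBeta' β t) = t * cBeta' β t - cBeta β t := by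
  have htangent : ∀ s, s * cBeta' β t - cBeta β s ≤ t * cBeta' β t - cBeta β t := fun s => by
    linarith [cBeta_add_mul_sub_le β t s]
  exact le_antisymm (ciSup_le htangent) (le_ciSup ⟨_, forall_mem_range.2 htangent⟩ t)

lemma Jbeta_neg (z : ℝ) : Jbeta β (-z) = Jbeta β z := by
  rw [Jbeta, ← (Equiv.neg ℝ).iSup_comp]
  simp [Jbeta, cBeta_neg]

lemma abs_sub_le_cBeta (t : ℝ) : |t| - β - log (1 + 2 * exp (-β)) ≤ cBeta β t := by
  have h : exp (|t| - β) ≤ 1 + 2 * exp (-β) * cosh t := by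
    rw [← cosh_abs, cosh_eq, sub_eq_add_neg, exp_add]
    nlinarith [mul_pos (exp_pos (-β)) (exp_pos (-|t|))]
  have := log_le_log (exp_pos _) h
  rw [log_exp] at this
  rw [cBeta_eq_log_sub_log]
  linarith

lemma le_Jbeta {z : ℝ} (hz : |z| ≤ 1) (t : ℝ) : t * z - cBeta β t ≤ Jbeta β z := by
  refine le_ciSup (f := fun t => t * z - cBeta β t)
    ⟨β + log (1 + 2 * exp (-β)), forall_mem_range.2 fun s => ?_⟩ t
  have hsz : s * z ≤ |s| :=
    (le_abs_self _).trans (by rw [abs_mul]; exact mul_le_of_le_one_right (abs_nonneg s) hz)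
  linarith [abs_sub_le_cBeta β s]

end Legendre

def Gtilde (β K z : ℝ) : ℝ := Jbeta β z - β * K * z ^ 2

section Gtilde

variable (β K : ℝ)

lemma Gtilde_neg (z : ℝ) : Gtilde β K (-z) = Gtilde β K z := by
  simp [Gtilde, Jbeta_neg]

lemma Gtilde_comp_cBeta' :
    Gtilde β K ∘ cBeta' β = fun t => t * cBeta' β t - cBeta β t - β * K * cBeta' β t ^ 2 :=
  funext fun t => by simp [Gtilde, Jbeta_cBeta']

lemma even_Gtilde_comp_cBeta' : (Gtilde β K ∘ cBeta' β).Even := fun t => by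
  simp only [Function.comp_apply, cBeta'_neg, Gtilde_neg]

lemma hasDerivAt_Gtilde_comp_cBeta' (t : ℝ) :
    HasDerivAt (Gtilde β K ∘ cBeta' β) (cBeta'' β t * (t - 2 * β * K * cBeta' β t)) t := by
  have h := hasDerivAt_cBeta' β t
  rw [Gtilde_comp_cBeta']
  exact ((((hasDerivAt_id t).mul h).sub (hasDerivAt_cBeta β t)).sub
    ((h.pow 2).const_mul (β * K))).congr_deriv (by simp; ring)

lemma continuous_Gtilde_comp_cBeta' : Continuous (Gtilde β K ∘ cBeta' β) :=
  continuous_iff_continuousAt.2 fun t => (hasDerivAt_Gtilde_comp_cBeta' β K t).continuousAt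

-- `J_β(1) ≥ T - c_β(T)`, so for `T = 2|βK| + 1` the gap `Gtilde β K 1 - g(T)` is at least
-- `(1 - c_β'(T)) (T - βK (1 + c_β'(T))) > 0`.
lemma exists_Gtilde_comp_cBeta'_lt_Gtilde_one :
    ∃ t, (Gtilde β K ∘ cBeta' β) t < Gtilde β K 1 := by
  set T := 2 * |β * K| + 1
  have hφ := abs_lt.1 (abs_cBeta'_lt_one β T)
  have hJ := le_Jbeta β (z := 1) (by norm_num) T
  have hβK : β * K * (1 + cBeta' β T) ≤ |β * K| * 2 :=
    calc β * K * (1 + cBeta' β T) ≤ |β * K| * |1 + cBeta' β T| := by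
          rw [← abs_mul]; exact le_abs_self _
      _ ≤ |β * K| * 2 := by gcongr; rw [abs_le]; constructor <;> linarith
  refine ⟨T, ?_⟩
  rw [Gtilde_comp_cBeta', Gtilde]
  nlinarith [mul_pos (sub_pos.2 hφ.2) (show 0 < T - β * K * (1 + cBeta' β T) by linarith)]

end Gtilde

section Concavity

variable {β : ℝ}

lemma quarter_le_exp_neg (hβ : β ≤ log 4) : 1 / 4 ≤ exp (-β) := by
  calc 1 / 4 = exp (-log 4) := by rw [exp_neg, exp_log (by norm_num)]; norm_num
    _ ≤ exp (-β) := exp_le_exp.2 (neg_le_neg hβ)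

-- For `t > 0` the third derivative has the sign of `1 - 2A cosh t - 8A² < (1 - 4A)(1 + 2A)`,
-- `A = e^{-β}`: this is where `β ≤ log 4` enters.
lemma strictConcaveOn_cBeta' (hβ : β ≤ log 4) : StrictConcaveOn ℝ (Ici 0) (cBeta' β) := by
  have hderiv : deriv (cBeta' β) = cBeta'' β := funext fun t => (hasDerivAt_cBeta' β t).deriv
  refine strictConcaveOn_of_deriv2_neg (convex_Ici 0) (continuous_cBeta' β).continuousOn
    fun t ht => ?_
  rw [interior_Ici] at ht
  rw [Function.iterate_succ_apply, Function.iterate_one, hderiv, (hasDerivAt_cBeta'' β t).deriv]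
  have hA := quarter_le_exp_neg hβ
  have hcosh : 1 < cosh t := one_lt_cosh.2 (ne_of_gt ht)
  have := one_add_two_mul_exp_neg_mul_cosh_pos β t
  refine div_neg_of_neg_of_pos (mul_neg_of_pos_of_neg (by positivity [sinh_pos_iff.2 ht]) ?_)
    (by positivity)
  nlinarith

lemma cBeta'_lt_cBeta''_zero_mul (hβ : β ≤ log 4) {t : ℝ} (ht : 0 < t) :
    cBeta' β t < cBeta'' β 0 * t := by
  have := (strictConcaveOn_cBeta' hβ).slope_lt_of_hasDerivAt self_mem_Ici ht.le ht
    (hasDerivAt_cBeta' β 0)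
  rwa [slope_def_field, cBeta'_zero, sub_zero, sub_zero, div_lt_iff₀ ht] at this

lemma strictAntiOn_cBeta'_div (hβ : β ≤ log 4) :
    StrictAntiOn (fun t => cBeta' β t / t) (Ioi 0) := fun x hx y hy hxy => by
  simpa [cBeta'_zero] using (strictConcaveOn_cBeta' hβ).secant_strict_mono self_mem_Ici
    (Ioi_subset_Ici_self hx) (Ioi_subset_Ici_self hy) (mem_Ioi.1 hx).ne' (mem_Ioi.1 hy).ne' hxy

end Concavity

/-- The coupling `K` at which `t > 0` is a critical point of `Gtilde β K ∘ cBeta' β`. -/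
def critK (β t : ℝ) : ℝ := t / (2 * β * cBeta' β t)

section CritK

lemma Kc2_eq_inv (β : ℝ) : Kc2 β = (2 * β * cBeta'' β 0)⁻¹ := by
  have := exp_pos (-β)
  rw [Kc2, cBeta''_zero]
  rcases eq_or_ne β 0 with rfl | hβ
  · simp
  · field_simp
    ring

lemma critK_eq_inv_slope (β t : ℝ) : critK β t = (2 * β * slope (cBeta' β) 0 t)⁻¹ := by
  rw [critK, slope_def_field, cBeta'_zero, sub_zero, sub_zero, mul_div_assoc', inv_div]

variable {β : ℝ}

lemma lt_critK_iff (hβ0 : 0 < β) {K t : ℝ} (ht : 0 < t) :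
    K < critK β t ↔ 2 * β * K * cBeta' β t < t := by
  have := cBeta'_pos β ht
  rw [critK, lt_div_iff₀ (by positivity)]
  ring_nf

lemma critK_lt_iff (hβ0 : 0 < β) {K t : ℝ} (ht : 0 < t) :
    critK β t < K ↔ t < 2 * β * K * cBeta' β t := by
  have := cBeta'_pos β ht
  rw [critK, div_lt_iff₀ (by positivity)]
  ring_nf

lemma Kc2_lt_critK (hβ0 : 0 < β) (hβ : β ≤ log 4) {t : ℝ} (ht : 0 < t) : Kc2 β < critK β t := by
  have h := cBeta'_lt_cBeta''_zero_mul hβ ht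
  have := cBeta''_pos β 0
  rw [lt_critK_iff hβ0 ht, Kc2_eq_inv, mul_inv, ← mul_assoc, mul_inv_cancel₀ (by positivity),
    one_mul, inv_mul_lt_iff₀ this]
  linarith

lemma strictMonoOn_critK (hβ0 : 0 < β) (hβ : β ≤ log 4) : StrictMonoOn (critK β) (Ioi 0) :=
  fun x hx y hy hxy => by
    have h := strictAntiOn_cBeta'_div hβ hx hy hxy
    have := cBeta'_pos β hx
    have := cBeta'_pos β hy
    rw [div_lt_div_iff₀ hy hx] at h
    rw [critK, critK, div_lt_div_iff₀ (by positivity) (by positivity)]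
    nlinarith

lemma continuousOn_critK (hβ0 : 0 < β) : ContinuousOn (critK β) (Ioi 0) :=
  continuousOn_id.div (continuousOn_const.mul (continuous_cBeta' β).continuousOn)
    fun t ht => (mul_pos (by positivity) (cBeta'_pos β ht)).ne'

lemma tendsto_critK_nhdsGT_zero (hβ0 : 0 < β) : Tendsto (critK β) (𝓝[>] 0) (𝓝 (Kc2 β)) := by
  have hslope := (hasDerivAt_iff_tendsto_slope.1 (hasDerivAt_cBeta' β 0)).mono_left
    (nhdsWithin_mono 0 fun t (ht : 0 < t) => ht.ne')
  rw [funext (critK_eq_inv_slope β), Kc2_eq_inv]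
  exact (hslope.const_mul (2 * β)).inv₀ (mul_pos (by positivity) (cBeta''_pos β 0)).ne'

lemma tendsto_critK_atTop (hβ0 : 0 < β) : Tendsto (critK β) atTop atTop := by
  refine tendsto_atTop_mono' _ ?_ (tendsto_id.atTop_div_const (by positivity : 0 < 2 * β))
  filter_upwards [eventually_gt_atTop 0] with t ht
  have := cBeta'_pos β ht
  have := (abs_lt.1 (abs_cBeta'_lt_one β t)).2
  rw [critK, id, div_le_div_iff₀ (by positivity) (by positivity)]
  nlinarith [mul_pos (mul_pos ht hβ0) (sub_pos.2 this)]

lemma bijOn_critK (hβ0 : 0 < β) (hβ : β ≤ log 4) : BijOn (critK β) (Ioi 0) (Ioi (Kc2 β)) := by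
  refine ⟨fun t ht => Kc2_lt_critK hβ0 hβ ht, (strictMonoOn_critK hβ0 hβ).injOn, ?_⟩
  intro K (hK : Kc2 β < K)
  obtain ⟨a, haK, ha0⟩ := ((tendsto_critK_nhdsGT_zero hβ0).eventually
    (gt_mem_nhds hK)).and self_mem_nhdsWithin |>.exists
  obtain ⟨b, hb0, hbK⟩ := ((eventually_gt_atTop 0).and
    ((tendsto_critK_atTop hβ0).eventually_gt_atTop K)).exists
  exact (continuousOn_critK hβ0).surjOn_Icc ha0 hb0 ⟨haK.le, hbK.le⟩

end CritK

section Minimizers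

variable {β K : ℝ}

lemma mem_tildeE_iff {z : ℝ} :
    z ∈ tildeE β K ↔ z ∈ Icc (-1) 1 ∧ ∀ y ∈ Icc (-1) 1, Gtilde β K z ≤ Gtilde β K y :=
  Iff.rfl

lemma strictMonoOn_Gtilde_comp_cBeta' (hβ0 : 0 < β) {a : ℝ} (ha : 0 ≤ a)
    (h : ∀ t, a < t → K < critK β t) : StrictMonoOn (Gtilde β K ∘ cBeta' β) (Ici a) := by
  refine strictMonoOn_of_deriv_pos (convex_Ici a) (continuous_Gtilde_comp_cBeta' β K).continuousOn
    fun t ht => ?_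
  rw [interior_Ici] at ht
  rw [(hasDerivAt_Gtilde_comp_cBeta' β K t).deriv]
  exact mul_pos (cBeta''_pos β t) (sub_pos.2 ((lt_critK_iff hβ0 (ha.trans_lt ht)).1 (h t ht)))

lemma strictAntiOn_Gtilde_comp_cBeta' (hβ0 : 0 < β) {a : ℝ}
    (h : ∀ t ∈ Ioo 0 a, critK β t < K) : StrictAntiOn (Gtilde β K ∘ cBeta' β) (Icc 0 a) := by
  refine strictAntiOn_of_deriv_neg (convex_Icc 0 a)
    (continuous_Gtilde_comp_cBeta' β K).continuousOn fun t ht => ?_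
  rw [interior_Icc] at ht
  rw [(hasDerivAt_Gtilde_comp_cBeta' β K t).deriv]
  exact mul_neg_of_pos_of_neg (cBeta''_pos β t)
    (sub_neg.2 ((critK_lt_iff hβ0 ht.1).1 (h t ht)))

lemma tildeE_eq_of_strictAntiOn_of_strictMonoOn {a : ℝ}
    (hanti : StrictAntiOn (Gtilde β K ∘ cBeta' β) (Icc 0 a))
    (hmono : StrictMonoOn (Gtilde β K ∘ cBeta' β) (Ici a)) :
    tildeE β K = {cBeta' β a, -cBeta' β a} := by
  set g := Gtilde β K ∘ cBeta' β
  have heven : g.Even := even_Gtilde_comp_cBeta' β K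
  have hmin : ∀ t, t ≠ a → t ≠ -a → g a < g t := fun t =>
    heven.lt_of_strictAntiOn_of_strictMonoOn hanti hmono
  have hval : ∀ z ∈ ({cBeta' β a, -cBeta' β a} : Set ℝ), Gtilde β K z = g a := by
    rintro z (rfl | rfl)
    · rfl
    · exact Gtilde_neg β K _
  have hle : ∀ t, g a ≤ g t := fun t => by
    rcases eq_or_ne t a with rfl | hta
    · exact le_rfl
    rcases eq_or_ne t (-a) with rfl | hta'
    · rw [heven]
    exact (hmin t hta hta').le
  have hlt : ∀ z ∈ Icc (-1 : ℝ) 1, z ∉ ({cBeta' β a, -cBeta' β a} : Set ℝ) →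
      g a < Gtilde β K z := by
    intro z hz hz'
    obtain ⟨T, hT⟩ := exists_Gtilde_comp_cBeta'_lt_Gtilde_one β K
    rcases eq_endpoints_or_mem_Ioo_of_mem_Icc hz with rfl | rfl | hz
    · rw [Gtilde_neg]
      exact (hle T).trans_lt hT
    · exact (hle T).trans_lt hT
    · obtain ⟨t, -, rfl⟩ := surjOn_cBeta' β hz
      exact hmin t (fun h => hz' (by simp [h])) (fun h => hz' (by simp [h, cBeta'_neg]))
  have hmem : ∀ z ∈ ({cBeta' β a, -cBeta' β a} : Set ℝ), z ∈ Icc (-1 : ℝ) 1 := by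
    rintro z (rfl | rfl) <;> simp only [mem_Icc, ← abs_le, abs_neg] <;>
      exact (abs_cBeta'_lt_one β a).le
  ext z
  rw [mem_tildeE_iff]
  refine ⟨fun ⟨hz, hzmin⟩ => ?_, fun hz => ⟨hmem z hz, fun y hy => ?_⟩⟩
  · by_contra hz'
    exact (hzmin _ (hmem _ (Or.inl rfl))).not_gt (hval _ (Or.inl rfl) ▸ hlt z hz hz')
  · rw [hval z hz]
    by_cases hy' : y ∈ ({cBeta' β a, -cBeta' β a} : Set ℝ)
    · rw [hval y hy']
    · exact (hlt y hy hy').le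

end Minimizers

/-- Fix `0 < β ≤ log 4`.  (a) For `0 < K ≤ K_c^{(2)}(β)`,
`Ẽ_{β,K} = {0}`.  (b) For `K > K_c^{(2)}(β)`, `Ẽ_{β,K} = {z̃(β,K), −z̃(β,K)}` with
`z̃(β,K) > 0`.  (c) `K ↦ z̃(β,K)` is strictly increasing and continuous on
`(K_c^{(2)}(β), ∞)`, and `z̃(β,K) → 0` as `K → K_c^{(2)}(β)⁺`. -/
theorem tildeE_structure_second_order (β : ℝ) (hβ0 : 0 < β) (hβ : β ≤ Real.log 4) :
    (∀ K : ℝ, 0 < K → K ≤ Kc2 β → tildeE β K = {0}) ∧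
    ∃ ztilde : ℝ → ℝ,
      (∀ K : ℝ, Kc2 β < K → 0 < ztilde K ∧ tildeE β K = {ztilde K, -ztilde K}) ∧
      StrictMonoOn ztilde (Set.Ioi (Kc2 β)) ∧
      ContinuousOn ztilde (Set.Ioi (Kc2 β)) ∧
      Filter.Tendsto ztilde (nhdsWithin (Kc2 β) (Set.Ioi (Kc2 β))) (nhds 0) := by
  have hbij := bijOn_critK hβ0 hβ
  set tK := Function.invFunOn (critK β) (Ioi 0)
  have hinv : InvOn tK (critK β) (Ioi 0) (Ioi (Kc2 β)) := hbij.invOn_invFunOn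
  have htK : BijOn tK (Ioi (Kc2 β)) (Ioi 0) := hbij.symm hinv.symm
  have himage : tK '' Ioi (Kc2 β) = Ioi 0 := htK.image_eq
  have hmono : StrictMonoOn tK (Ioi (Kc2 β)) :=
    (strictMonoOn_critK hβ0 hβ).strictMonoOn_invFunOn hbij.surjOn
  refine ⟨fun K _ hK => ?_, cBeta' β ∘ tK, fun K hK => ?_,
    (strictMono_cBeta' β).comp_strictMonoOn hmono,
    (continuous_cBeta' β).comp_continuousOn
      (hmono.continuousOn_of_isOpen_image isOpen_Ioi (himage ▸ isOpen_Ioi)), ?_⟩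
  · simpa [cBeta'_zero] using tildeE_eq_of_strictAntiOn_of_strictMonoOn
      (strictAntiOn_Gtilde_comp_cBeta' hβ0 (a := 0) fun t ht => absurd ht.2 ht.1.not_gt)
      (strictMonoOn_Gtilde_comp_cBeta' hβ0 le_rfl fun t ht => hK.trans_lt (Kc2_lt_critK hβ0 hβ ht))
  · have ha : 0 < tK K := htK.mapsTo hK
    have haK : critK β (tK K) = K := hinv.2 hK
    have hcrit := strictMonoOn_critK hβ0 hβ
    exact ⟨cBeta'_pos β ha, tildeE_eq_of_strictAntiOn_of_strictMonoOn
      (strictAntiOn_Gtilde_comp_cBeta' hβ0 fun t ht => haK ▸ hcrit ht.1 ha ht.2)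
      (strictMonoOn_Gtilde_comp_cBeta' hβ0 ha.le fun t ht => haK ▸ hcrit ha (ha.trans ht) ht)⟩
  · have h := hmono.monotoneOn.tendsto_nhdsGT (himage ▸ bddBelow_Ioi)
    rw [himage, csInf_Ioi] at h
    simpa [cBeta'_zero] using ((continuous_cBeta' β).tendsto 0).comp h
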